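/- Let ξ be a connected core graph of type (g, n, r) (admissible marking, no marked legs) with n = 3(g−1) + 2(n−r). Then every edge of ξ is marked (so r = |E|), every neutral vertex is trivalent, ξ has no tadpoles, and every neutral vertex is connected to the distinguished vertex by 1, 2, or 3 edges, being adjacent to 2, 1, or 0 legs respectively. Consequently ξ is isomorphic to one of the graphs θ_{g,ℓ}(p) where ℓ = n − r, for some p of parity opposite to g with 0 ≤ p < g and p ≤ n. -/

import Mathlib

/-! Counting flags and using the Euler relation gives the identity
`3g + n = 2r + 3 + (|E| - r) + (val v₀ - r) + ∑_{w ≠ v₀} (val w - 3)`, in which every bracket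
is nonnegative: marked flags lie at `v₀`, the marked flags and their partners are distinct
non-leg flags, and neutral vertices are stable. At the extremal value all brackets vanish, so
every flag at `v₀` and every edge is marked and neutral vertices are trivalent. The partner of a
non-leg flag at a neutral vertex is then at `v₀`, connectedness gives each neutral vertex at least
one such edge, and sorting the neutral vertices by their number of edges to `v₀` yields `p`, `t`
and `y`. -/

/-- A finite graph with a marking, following Payne–Willwacher: a finite nonempty set
of vertices `V`, a finite set of flags (half-edges) `F`, an adjacency map `a`, an
involution `ι` (whose 2-element orbits are edges and whose fixed points are legs),
together with a distinguished vertex `dv` and a set `marked ⊆ a⁻¹(dv)` of marked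
flags. -/
structure MGraph where
  V : Type
  F : Type
  [fintypeV : Fintype V]
  [fintypeF : Fintype F]
  [decV : DecidableEq V]
  [decF : DecidableEq F]
  nonemptyV : Nonempty V
  a : F → V
  ι : F → F
  ι_invol : ∀ f, ι (ι f) = f
  dv : V
  marked : Finset F
  marked_adj : ∀ f ∈ marked, a f = dv

namespace MGraph

attribute [instance] fintypeV fintypeF decV decF

variable (G : MGraph)

/-- The number of legs (fixed flags). -/
noncomputable def numLegs : ℕ := Fintype.card {f : G.F // G.ι f = f}

/-- The number of edges (2-element orbits of the involution). -/
noncomputable def numEdges : ℕ := Fintype.card {f : G.F // G.ι f ≠ f} / 2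

/-- Two vertices are adjacent if some edge joins them. -/
def Adj (v w : G.V) : Prop := ∃ f, G.ι f ≠ f ∧ G.a f = v ∧ G.a (G.ι f) = w

/-- The graph is connected. -/
def Connected : Prop := ∀ v w : G.V, Relation.ReflTransGen G.Adj v w

/-- Admissibility of the marking: stability (neutral vertices have valence ≥ 3),
no neutral tadpoles, and no doubly-marked edges. -/
def Admissible : Prop :=
  (∀ w : G.V, w ≠ G.dv → 3 ≤ Fintype.card {f : G.F // G.a f = w}) ∧
  (∀ f : G.F, G.ι f ≠ f → G.a f = G.a (G.ι f) → G.a f = G.dv) ∧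
  (∀ f ∈ G.marked, G.ι f ∈ G.marked → G.ι f = f)

/-- A core graph has no marked legs. -/
def NoMarkedLegs : Prop := ∀ f ∈ G.marked, G.ι f ≠ f

/-- The graph is of type `(g, n, r)`: first Betti number `g − 1`
(i.e. `|E| − |V| + 1 = g − 1`, written additively), `n` legs and `r` marked flags. -/
def IsType (g n r : ℕ) : Prop :=
  G.numEdges + 2 = Fintype.card G.V + g ∧ G.numLegs = n ∧ G.marked.card = r

end MGraph

namespace MGraph

variable (G : MGraph)

/-- The number of edges joining a vertex `w` to the distinguished vertex,
counted by flags at `w` whose partner lies at the distinguished vertex. -/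
noncomputable def edgesToDV (w : G.V) : ℕ :=
  Fintype.card {f : G.F // G.a f = w ∧ G.ι f ≠ f ∧ G.a (G.ι f) = G.dv}

/-- The number of legs at a vertex `w`. -/
noncomputable def legsAt (w : G.V) : ℕ :=
  Fintype.card {f : G.F // G.a f = w ∧ G.ι f = f}

end MGraph

open Finset

theorem Finset.sum_eq_sum_mul_card_filter_eq {α : Type*} {s : Finset α} {t : Finset ℕ}
    {f : α → ℕ} (h : ∀ a ∈ s, f a ∈ t) :
    ∑ a ∈ s, f a = ∑ k ∈ t, k * #{a ∈ s | f a = k} := by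
  rw [← sum_fiberwise_of_maps_to h]
  refine sum_congr rfl fun k _ => ?_
  rw [sum_congr rfl fun a ha => (mem_filter.1 ha).2, sum_const, smul_eq_mul, mul_comm]

namespace MGraph

variable (G : MGraph)

def valence (v : G.V) : ℕ := Fintype.card {f : G.F // G.a f = v}

def nonlegs : Finset G.F := {f | G.ι f ≠ f}

def NoDoublyMarkedEdges : Prop := ∀ f ∈ G.marked, G.ι f ∈ G.marked → G.ι f = f

def EveryEdgeMarked : Prop := ∀ f, G.ι f ≠ f → f ∈ G.marked ∨ G.ι f ∈ G.marked

theorem card_nonlegs : #G.nonlegs = 2 * G.numEdges := by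
  let σ := Function.Involutive.toPerm G.ι G.ι_invol
  have h : 2 ∣ #σ.support := Equiv.Perm.two_dvd_card_support (by ext x; exact G.ι_invol x)
  have hs : σ.support = G.nonlegs := by
    ext f
    simp only [Equiv.Perm.mem_support, nonlegs, mem_filter, mem_univ, true_and]
    rfl
  rw [hs] at h
  rw [numEdges, Fintype.card_subtype, ← nonlegs, Nat.mul_div_cancel' h]

theorem numLegs_add_two_mul_numEdges : G.numLegs + 2 * G.numEdges = Fintype.card G.F := by
  rw [← card_nonlegs, numLegs, Fintype.card_subtype, nonlegs, ← card_univ]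
  exact card_filter_add_card_filter_not _

theorem sum_valence : ∑ v, G.valence v = Fintype.card G.F := by
  simp only [valence, Fintype.card_subtype]
  exact (card_eq_sum_card_fiberwise fun _ _ => mem_univ _).symm

theorem sum_legsAt : ∑ v, G.legsAt v = G.numLegs := by
  simp only [legsAt, numLegs, Fintype.card_subtype]
  rw [card_eq_sum_card_fiberwise (f := G.a) (t := univ) fun _ _ => mem_univ _]
  simp only [filter_filter, and_comm]

theorem three_mul_add_numLegs_eq {g n r : ℕ} (htype : G.IsType g n r) :
    (3 * g + n : ℤ) = 2 * r + 3 + (G.numEdges - r) + (G.valence G.dv - r) +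
      ∑ w ∈ univ.erase G.dv, ((G.valence w : ℤ) - 3) := by
  obtain ⟨hEuler, rfl, -⟩ := htype
  have hflags := G.numLegs_add_two_mul_numEdges
  have hval := G.sum_valence
  rw [← add_sum_erase _ _ (mem_univ G.dv)] at hval
  have hV : 0 < Fintype.card G.V := Fintype.card_pos_iff.2 G.nonemptyV
  rw [sum_sub_distrib, sum_const, card_erase_of_mem (mem_univ _), card_univ, nsmul_eq_mul,
    Nat.cast_sub hV]
  zify at hEuler hflags hval
  push_cast
  linear_combination hflags - 3 * hEuler - hval

theorem card_marked_le_valence_dv : #G.marked ≤ G.valence G.dv := by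
  rw [valence, Fintype.card_subtype]
  exact card_le_card fun f hf => mem_filter.2 ⟨mem_univ f, G.marked_adj f hf⟩

theorem mem_marked_of_valence_dv_le (h : G.valence G.dv ≤ #G.marked) {f : G.F}
    (hf : G.a f = G.dv) : f ∈ G.marked := by
  rw [valence, Fintype.card_subtype] at h
  have hsub : G.marked ⊆ ({f | G.a f = G.dv} : Finset G.F) := fun f hf =>
    mem_filter.2 ⟨mem_univ f, G.marked_adj f hf⟩
  rw [eq_of_subset_of_card_le hsub h]
  exact mem_filter.2 ⟨mem_univ f, hf⟩

variable {G}

theorem ι_notMem_marked (hcore : G.NoMarkedLegs) (hdouble : G.NoDoublyMarkedEdges) {f : G.F}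
    (hf : f ∈ G.marked) : G.ι f ∉ G.marked :=
  fun hι => hcore f hf (hdouble f hf hι)

theorem marked_union_image_ι_subset_nonlegs (hcore : G.NoMarkedLegs) :
    G.marked ∪ G.marked.image G.ι ⊆ G.nonlegs := by
  refine union_subset (fun f hf => mem_filter.2 ⟨mem_univ f, hcore f hf⟩) fun f hf => ?_
  obtain ⟨x, hx, rfl⟩ := mem_image.1 hf
  refine mem_filter.2 ⟨mem_univ _, ?_⟩
  rw [G.ι_invol]
  exact (hcore x hx).symm

theorem card_marked_union_image_ι (hcore : G.NoMarkedLegs) (hdouble : G.NoDoublyMarkedEdges) :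
    #(G.marked ∪ G.marked.image G.ι) = 2 * #G.marked := by
  have hdisj : Disjoint G.marked (G.marked.image G.ι) := by
    refine disjoint_left.2 fun f hf hf' => ?_
    obtain ⟨x, hx, rfl⟩ := mem_image.1 hf'
    exact ι_notMem_marked hcore hdouble hx hf
  rw [card_union_of_disjoint hdisj,
    card_image_of_injective _ (Function.LeftInverse.injective G.ι_invol), two_mul]

theorem card_marked_le_numEdges (hcore : G.NoMarkedLegs) (hdouble : G.NoDoublyMarkedEdges) :
    #G.marked ≤ G.numEdges := by
  have := card_le_card (marked_union_image_ι_subset_nonlegs hcore)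
  rw [card_marked_union_image_ι hcore hdouble, card_nonlegs] at this
  omega

theorem everyEdgeMarked_of_numEdges_le (hcore : G.NoMarkedLegs)
    (hdouble : G.NoDoublyMarkedEdges) (h : G.numEdges ≤ #G.marked) : G.EveryEdgeMarked := by
  intro f hf
  have hcard : #G.nonlegs ≤ #(G.marked ∪ G.marked.image G.ι) := by
    rw [card_marked_union_image_ι hcore hdouble, card_nonlegs]
    omega
  have hf' : f ∈ G.marked ∪ G.marked.image G.ι := by
    rw [eq_of_subset_of_card_le (marked_union_image_ι_subset_nonlegs hcore) hcard]
    exact mem_filter.2 ⟨mem_univ f, hf⟩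
  refine (mem_union.1 hf').imp_right fun hι => ?_
  obtain ⟨x, hx, rfl⟩ := mem_image.1 hι
  rwa [G.ι_invol]

theorem tight_of_extremal (hcore : G.NoMarkedLegs) (hdouble : G.NoDoublyMarkedEdges)
    (hstable : ∀ w, w ≠ G.dv → 3 ≤ G.valence w) {g n r : ℕ} (htype : G.IsType g n r)
    (hext : 3 * g + n = 2 * r + 3) :
    r = G.numEdges ∧ G.valence G.dv = r ∧ ∀ w, w ≠ G.dv → G.valence w = 3 := by
  have hslack := G.three_mul_add_numLegs_eq htype
  have hE : r ≤ G.numEdges := htype.2.2 ▸ card_marked_le_numEdges hcore hdouble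
  have hdv : r ≤ G.valence G.dv := htype.2.2 ▸ G.card_marked_le_valence_dv
  have hnonneg : ∀ w ∈ univ.erase G.dv, 0 ≤ (G.valence w : ℤ) - 3 := fun w hw => by
    have := hstable w (ne_of_mem_erase hw)
    omega
  have hsum : ∑ w ∈ univ.erase G.dv, ((G.valence w : ℤ) - 3) = 0 := by
    have := sum_nonneg hnonneg
    omega
  refine ⟨by omega, by omega, fun w hw => ?_⟩
  have := (sum_eq_zero_iff_of_nonneg hnonneg).1 hsum w (mem_erase.2 ⟨hw, mem_univ w⟩)
  omega

theorem a_ι_eq_dv (hedge : G.EveryEdgeMarked) {f : G.F} (hf : G.ι f ≠ f)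
    (hw : G.a f ≠ G.dv) : G.a (G.ι f) = G.dv :=
  G.marked_adj _ ((hedge f hf).resolve_left fun h => hw (G.marked_adj f h))

theorem a_ne_a_ι (hcore : G.NoMarkedLegs) (hdouble : G.NoDoublyMarkedEdges)
    (htadpole : ∀ f, G.ι f ≠ f → G.a f = G.a (G.ι f) → G.a f = G.dv)
    (hatdv : ∀ f, G.a f = G.dv → f ∈ G.marked) {f : G.F} (hf : G.ι f ≠ f) :
    G.a f ≠ G.a (G.ι f) := fun heq =>
  have hdv := htadpole f hf heq
  ι_notMem_marked hcore hdouble (hatdv f hdv) (hatdv _ (heq ▸ hdv))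

theorem legsAt_add_edgesToDV (hedge : G.EveryEdgeMarked) {w : G.V} (hw : w ≠ G.dv) :
    G.legsAt w + G.edgesToDV w = G.valence w := by
  simp only [legsAt, edgesToDV, valence, Fintype.card_subtype]
  rw [← card_filter_add_card_filter_not (s := {f | G.a f = w}) (fun f => G.ι f = f),
    filter_filter, filter_filter]
  congr 2
  ext f
  simp only [mem_filter, mem_univ, true_and]
  constructor
  · exact fun ⟨haw, hf, _⟩ => ⟨haw, hf⟩
  · exact fun ⟨haw, hf⟩ => ⟨haw, hf, a_ι_eq_dv hedge hf (haw ▸ hw)⟩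

theorem edgesToDV_pos (hedge : G.EveryEdgeMarked) (hconn : G.Connected) {w : G.V}
    (hw : w ≠ G.dv) : 0 < G.edgesToDV w := by
  rcases (hconn w G.dv).cases_head with rfl | ⟨_, ⟨f, hf, haw, _⟩, _⟩
  · exact absurd rfl hw
  · exact Fintype.card_pos_iff.2 ⟨⟨f, haw, hf, a_ι_eq_dv hedge hf (haw ▸ hw)⟩⟩

theorem edgesToDV_legsAt_cases (hedge : G.EveryEdgeMarked) (hconn : G.Connected) {w : G.V}
    (hw : w ≠ G.dv) (htri : G.valence w = 3) :
    (G.edgesToDV w = 1 ∧ G.legsAt w = 2) ∨ (G.edgesToDV w = 2 ∧ G.legsAt w = 1) ∨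
      (G.edgesToDV w = 3 ∧ G.legsAt w = 0) := by
  have := legsAt_add_edgesToDV hedge hw
  have := edgesToDV_pos hedge hconn hw
  omega

theorem sum_legsAt_erase_dv (hcore : G.NoMarkedLegs)
    (hatdv : ∀ f, G.a f = G.dv → f ∈ G.marked) :
    ∑ w ∈ univ.erase G.dv, G.legsAt w = G.numLegs := by
  have hdv : G.legsAt G.dv = 0 :=
    Fintype.card_eq_zero_iff.2 ⟨fun ⟨f, haf, hf⟩ => hcore f (hatdv f haf) hf⟩
  rw [← sum_legsAt, ← add_sum_erase _ _ (mem_univ G.dv), hdv, zero_add]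

theorem sum_edgesToDV_erase_dv_add_valence_dv (hcore : G.NoMarkedLegs)
    (hedge : G.EveryEdgeMarked) (hatdv : ∀ f, G.a f = G.dv → f ∈ G.marked) :
    ∑ w ∈ univ.erase G.dv, G.edgesToDV w + G.valence G.dv = 2 * G.numEdges := by
  have hval := G.sum_valence
  rw [← add_sum_erase _ _ (mem_univ G.dv),
    ← sum_congr rfl fun w hw => legsAt_add_edgesToDV hedge (ne_of_mem_erase hw),
    sum_add_distrib, sum_legsAt_erase_dv hcore hatdv] at hval
  have := G.numLegs_add_two_mul_numEdges
  omega

theorem exists_theta_parameters {g n r : ℕ}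
    (hshape : ∀ w, w ≠ G.dv → (G.edgesToDV w = 1 ∧ G.legsAt w = 2) ∨
      (G.edgesToDV w = 2 ∧ G.legsAt w = 1) ∨ (G.edgesToDV w = 3 ∧ G.legsAt w = 0))
    (hlegs : ∑ w ∈ univ.erase G.dv, G.legsAt w = n)
    (hedges : ∑ w ∈ univ.erase G.dv, G.edgesToDV w = r)
    (hg : r + 2 = Fintype.card G.V + g) :
    ∃ p t y : ℕ, (p % 2 ≠ g % 2) ∧ p < g ∧ p ≤ n ∧
      p + 2 * t + 1 = g ∧ p + 2 * y = n ∧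
      Fintype.card {w : G.V // w ≠ G.dv ∧ G.edgesToDV w = 2} = p ∧
      Fintype.card {w : G.V // w ≠ G.dv ∧ G.edgesToDV w = 3} = t ∧
      Fintype.card {w : G.V // w ≠ G.dv ∧ G.edgesToDV w = 1} = y := by
  set N := univ.erase G.dv
  have hmaps : ∀ w ∈ N, G.edgesToDV w ∈ ({1, 2, 3} : Finset ℕ) := fun w hw => by
    rcases hshape w (ne_of_mem_erase hw) with h | h | h <;> simp [h.1]
  have hcardN : #N = #{w ∈ N | G.edgesToDV w = 1} + #{w ∈ N | G.edgesToDV w = 2} +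
      #{w ∈ N | G.edgesToDV w = 3} := by
    rw [card_eq_sum_card_fiberwise hmaps]
    simp [add_assoc]
  have hsum : ∑ w ∈ N, G.edgesToDV w = #{w ∈ N | G.edgesToDV w = 1} +
      2 * #{w ∈ N | G.edgesToDV w = 2} + 3 * #{w ∈ N | G.edgesToDV w = 3} := by
    rw [sum_eq_sum_mul_card_filter_eq hmaps]
    simp [add_assoc]
  have hlocal : ∑ w ∈ N, G.legsAt w + ∑ w ∈ N, G.edgesToDV w = 3 * #N := by
    rw [← sum_add_distrib, sum_congr rfl fun w hw => ?_, sum_const, smul_eq_mul, mul_comm]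
    rcases hshape w (ne_of_mem_erase hw) with h | h | h <;> omega
  have hV : #N + 1 = Fintype.card G.V := by
    rw [card_erase_add_one (mem_univ _), card_univ]
  have hcount : ∀ k, Fintype.card {w : G.V // w ≠ G.dv ∧ G.edgesToDV w = k} =
      #{w ∈ N | G.edgesToDV w = k} := fun k => by
    rw [Fintype.card_subtype, filter_erase, ← filter_ne', filter_filter]
    simp only [and_comm]
  exact ⟨_, _, _, by omega, by omega, by omega, by omega, by omega,
    hcount 2, hcount 3, hcount 1⟩

end MGraph

open Classical in
/-- a connected core graph of type `(g, n, r)` attaining the bound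
`n = 3(g−1) + 2(n−r)` has every edge marked (so `r = |E|`), every neutral vertex
trivalent, no tadpoles, and every neutral vertex joined to the distinguished vertex
by 1, 2 or 3 edges, carrying 2, 1 or 0 legs respectively.  Consequently the graph is
isomorphic to `θ_{g,ℓ}(p)` (with `ℓ = n − r`), identified by its statistics: for
some `p` of parity opposite to `g` with `0 ≤ p < g` and `p ≤ n`, it has exactly `p`
neutral vertices joined to the distinguished vertex by 2 parallel edges,
`t = (g−1−p)/2` joined by 3 edges, and `y = (n−p)/2` joined by a single edge. -/
theorem core_graph_extremal_classification (G : MGraph) (g n r : ℕ)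
    (hconn : G.Connected) (hadm : G.Admissible) (hcore : G.NoMarkedLegs)
    (htype : G.IsType g n r)
    (hext : (n : ℤ) = 3 * ((g : ℤ) - 1) + 2 * ((n : ℤ) - (r : ℤ))) :
    (∀ f : G.F, G.ι f ≠ f → (f ∈ G.marked ∨ G.ι f ∈ G.marked)) ∧
    r = G.numEdges ∧
    (∀ w : G.V, w ≠ G.dv → Fintype.card {f : G.F // G.a f = w} = 3) ∧
    (∀ f : G.F, G.ι f ≠ f → G.a f ≠ G.a (G.ι f)) ∧
    (∀ w : G.V, w ≠ G.dv →
      (G.edgesToDV w = 1 ∧ G.legsAt w = 2) ∨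
      (G.edgesToDV w = 2 ∧ G.legsAt w = 1) ∨
      (G.edgesToDV w = 3 ∧ G.legsAt w = 0)) ∧
    (∃ p t y : ℕ,
      (p % 2 ≠ g % 2) ∧ p < g ∧ p ≤ n ∧
      p + 2 * t + 1 = g ∧ p + 2 * y = n ∧
      Fintype.card {w : G.V // w ≠ G.dv ∧ G.edgesToDV w = 2} = p ∧
      Fintype.card {w : G.V // w ≠ G.dv ∧ G.edgesToDV w = 3} = t ∧
      Fintype.card {w : G.V // w ≠ G.dv ∧ G.edgesToDV w = 1} = y) := by
  obtain ⟨hstable, htadpole, hdouble⟩ := hadm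
  obtain ⟨hrE, hdv, htri⟩ := MGraph.tight_of_extremal hcore hdouble hstable htype (by omega)
  obtain ⟨hEuler, hlegs, hr⟩ := htype
  have hatdv : ∀ f, G.a f = G.dv → f ∈ G.marked := fun f =>
    G.mem_marked_of_valence_dv_le (by omega)
  have hedge := MGraph.everyEdgeMarked_of_numEdges_le hcore hdouble (by omega)
  have hshape := fun w hw => MGraph.edgesToDV_legsAt_cases hedge hconn hw (htri w hw)
  have hedges := MGraph.sum_edgesToDV_erase_dv_add_valence_dv hcore hedge hatdv
  refine ⟨hedge, hrE, htri, fun f => MGraph.a_ne_a_ι hcore hdouble htadpole hatdv, hshape,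
    MGraph.exists_theta_parameters hshape (hlegs ▸ MGraph.sum_legsAt_erase_dv hcore hatdv)
      (r := r) (by omega) (by omega)⟩
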